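/- Let T be a finite plane tree with n ≥ 2 vertices, with mirrored enumeration w_0 = ∅, w_1, …, w_{n−1}, and let ι : T∖{∅} → (rot T)° be the unique lexicographic-order-preserving bijection from the non-root vertices of T onto the internal vertices of rot T. Then for all 1 ≤ k ≤ n−1, the height of ι(w_k) in rot T equals H_{T^÷}(k) + S_{T^÷}(k) − 1. -/

import Mathlib

inductive PTree : Type
  | node : List PTree → PTree

namespace PTree

instance : Inhabited PTree := ⟨node []⟩

mutual
def size : PTree → ℕ
  | node ts => 1 + sizeList ts
def sizeList : List PTree → ℕ
  | [] => 0
  | t :: ts => size t + sizeList ts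
end

def deg : PTree → ℕ
  | node ts => ts.length

mutual
def degreesAux : PTree → List ℕ
  | node ts => ts.length :: degreesListAux ts
def degreesListAux : List PTree → List ℕ
  | [] => []
  | t :: ts => degreesAux t ++ degreesListAux ts
end

mutual
def heightsAux : PTree → ℕ → List ℕ
  | node ts, d => d :: heightsListAux ts (d + 1)
def heightsListAux : List PTree → ℕ → List ℕ
  | [], _ => []
  | t :: ts, d => heightsAux t d ++ heightsListAux ts d
end

mutual
def contourAux : PTree → ℕ → List ℕ
  | node ts, d => d :: contourListAux ts (d + 1)
def contourListAux : List PTree → ℕ → List ℕ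
  | [], _ => []
  | t :: ts, d => contourAux t d ++ (d - 1) :: contourListAux ts d
end

mutual
def verticesAux : PTree → List ℕ → List (List ℕ)
  | node ts, p => p :: verticesListAux ts p 0
def verticesListAux : List PTree → List ℕ → ℕ → List (List ℕ)
  | [], _, _ => []
  | t :: ts, p, i => verticesAux t (p ++ [i]) ++ verticesListAux ts p (i + 1)
end

def vertices (T : PTree) : List (List ℕ) := verticesAux T []

/-- Height process of a plane tree. -/
def H (T : PTree) (k : ℕ) : ℕ := (heightsAux T 0).getD k 0

/-- Contour process of a plane tree. -/
def C (T : PTree) (k : ℕ) : ℕ := (contourAux T 0).getD k 0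

/-- Łukasiewicz walk of a plane tree. -/
def S (T : PTree) (k : ℕ) : ℤ :=
  (((degreesAux T).take k).map (fun d => (d : ℤ) - 1)).sum

def subtreeAt : List ℕ → PTree → Option PTree
  | [], t => some t
  | i :: p, node ts => (ts[i]?).bind (subtreeAt p)

def isInternal (T : PTree) (p : List ℕ) : Bool :=
  match subtreeAt p T with
  | some (node (_ :: _)) => true
  | _ => false

def isVertex (T : PTree) (p : List ℕ) : Bool := (subtreeAt p T).isSome

def rot : PTree → PTree
  | node [] => node []
  | node (t :: ts) => node [rot t, rot (node ts)]

mutual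
def corot : PTree → PTree
  | node ts => corotAux ts (node [])
def corotAux : List PTree → PTree → PTree
  | [], acc => acc
  | t :: ts, acc => corotAux ts (node [acc, corot t])
end

mutual
def mirror : PTree → PTree
  | node ts => node (mirrorList ts)
def mirrorList : List PTree → List PTree
  | [] => []
  | t :: ts => mirrorList ts ++ [mirror t]
end

mutual
def internalTree : PTree → PTree
  | node ts => node (internalList ts)
def internalList : List PTree → List PTree
  | [] => []
  | node [] :: ts => internalList ts
  | t :: ts => internalTree t :: internalList ts
end

def mirrorPath : PTree → List ℕ → List ℕ
  | _, [] => []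
  | node ts, i :: p =>
      (ts.length - 1 - i) ::
        (match ts[i]? with
         | some t => mirrorPath t p
         | none => p)

def lexLt : List ℕ → List ℕ → Bool
  | _, [] => false
  | [], _ :: _ => true
  | a :: as, b :: bs => if a < b then true else if a = b then lexLt as bs else false

def nonRootVertices (T : PTree) : List (List ℕ) := (vertices T).tail

def internalVertices (T : PTree) : List (List ℕ) :=
  (vertices T).filter (fun p => isInternal T p)

/-- the order-preserving identification between non-root vertices of `T` and
internal vertices of `rot T`. -/
def iota (T : PTree) (u : List ℕ) : List ℕ :=
  (internalVertices (rot T)).getD ((nonRootVertices T).idxOf u) []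

/-- `L(u)`: number of edges grafted on the left of the ancestral line of `u`. -/
def Lnum (T : PTree) (u : List ℕ) : ℕ :=
  ((vertices T).filter (fun w =>
      !w.isEmpty && (w.dropLast.isPrefixOf u && w.dropLast != u)
        && !(w.isPrefixOf u && w != u) && lexLt w u)).length

/-- mirrored enumeration of `T`. -/
def mirroredEnum (T : PTree) (k : ℕ) : List ℕ :=
  mirrorPath (mirror T) ((vertices (mirror T)).getD k [])

def descendR (T : PTree) : ℕ → List ℕ → List ℕ
  | 0, p => p
  | fuel + 1, p => if isInternal T (p ++ [1]) then descendR T fuel (p ++ [1]) else p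

def ascend (visited : List (List ℕ)) : ℕ → List ℕ → List ℕ
  | 0, p => p.dropLast
  | fuel + 1, p => if p.dropLast ∈ visited then ascend visited fuel p.dropLast else p.dropLast

def rightmostSeq (T : PTree) : ℕ → List (List ℕ)
  | 0 => []
  | k + 1 =>
      let prev := rightmostSeq T k
      let next :=
        match prev.getLast? with
        | none => descendR T (size T) []
        | some p =>
            if isInternal T (p ++ [0]) then descendR T (size T) (p ++ [0])
            else ascend prev (size T) p
      prev ++ [next]

def Hstar (T : PTree) (k : ℕ) : ℤ :=
  if k = 0 ∨ size T ≤ k then 0 else ((iota T (mirroredEnum T k)).length : ℤ)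

end PTree

open PTree

/-!
Put `M := T^÷`, so that `w_k` is the mirror image of the `k`-th vertex `v` of `M`. If `M` has
root subtrees `M_0, …, M_{m-1}` and `v` is the `k'`-th vertex of `M_j`, then `w_k` lies in the
root subtree `M_j^÷` of `T`, which is the `(m-1-j)`-th one. In `rot T` the roots of the root
subtrees of `T` form the right spine, so `ι(w_k)` has height `m-1-j` if `k' = 0`, and otherwise
`m-1-j+1` plus the height of the corresponding vertex in `rot M_j^÷`. The quantity
`H_M(k) + S_M(k) - 1` obeys the same recursion: the height grows by one, and the Łukasiewicz walk
picks up `m - 1` at the root and `-1` for each of the `j` complete subtrees `M_0, …, M_{j-1}`.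
Induction on the size of `M` concludes.
-/

namespace PTree

theorem size_node (ts : List PTree) : size (node ts) = 1 + sizeList ts := rfl

theorem size_pos (t : PTree) : 0 < size t := by
  obtain ⟨ts⟩ := t
  rw [size_node]
  omega

theorem sizeList_append (l₁ l₂ : List PTree) :
    sizeList (l₁ ++ l₂) = sizeList l₁ + sizeList l₂ := by
  induction l₁ with
  | nil => simp [sizeList]
  | cons t ts ih => simp only [List.cons_append, sizeList, ih]; omega

theorem sizeList_take_add_size_le (ts : List PTree) (i : ℕ) (hi : i < ts.length) :
    sizeList (ts.take i) + size ts[i] ≤ sizeList ts := by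
  induction ts generalizing i with
  | nil => simp at hi
  | cons t ts ih =>
      cases i with
      | zero => simp [sizeList]
      | succ i =>
          have := ih i (by simpa using hi)
          simp only [List.take_succ_cons, sizeList, List.getElem_cons_succ]
          omega

theorem exists_eq_sizeList_take_add (ts : List PTree) (k : ℕ) (hk : k < sizeList ts) :
    ∃ j, ∃ hj : j < ts.length, ∃ k' < size ts[j], k = sizeList (ts.take j) + k' := by
  induction ts generalizing k with
  | nil => simp [sizeList] at hk
  | cons t ts ih =>
      by_cases h : k < size t
      · exact ⟨0, by simp, k, h, by simp [sizeList]⟩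
      · rw [sizeList] at hk
        obtain ⟨j, hj, k', hk', hk⟩ := ih (k - size t) (by omega)
        refine ⟨j + 1, by simpa using hj, k', hk', ?_⟩
        simp only [List.take_succ_cons, sizeList]
        omega

mutual
theorem size_mirror : ∀ t : PTree, size (mirror t) = size t
  | node ts => by rw [mirror, size_node, size_node, sizeList_mirrorList]
theorem sizeList_mirrorList : ∀ ts : List PTree, sizeList (mirrorList ts) = sizeList ts
  | [] => rfl
  | t :: ts => by
      rw [mirrorList, sizeList_append, sizeList_mirrorList ts, sizeList, sizeList, sizeList,
        size_mirror t]
      omega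
end

theorem mirrorList_eq_reverse_map : ∀ ts : List PTree, mirrorList ts = (ts.map mirror).reverse
  | [] => rfl
  | t :: ts => by rw [mirrorList, mirrorList_eq_reverse_map ts]; simp

theorem mirrorList_append (l₁ l₂ : List PTree) :
    mirrorList (l₁ ++ l₂) = mirrorList l₂ ++ mirrorList l₁ := by
  simp [mirrorList_eq_reverse_map]

mutual
theorem mirror_mirror : ∀ t : PTree, mirror (mirror t) = t
  | node ts => by rw [mirror, mirror, mirrorList_mirrorList]
theorem mirrorList_mirrorList : ∀ ts : List PTree, mirrorList (mirrorList ts) = ts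
  | [] => rfl
  | t :: ts => by
      rw [mirrorList, mirrorList_append, mirrorList_mirrorList ts, mirrorList, mirrorList,
        mirror_mirror t]
      rfl
end

theorem length_mirrorList (ts : List PTree) : (mirrorList ts).length = ts.length := by
  simp [mirrorList_eq_reverse_map]

theorem getElem_mirrorList (ts : List PTree) (j : ℕ) (hj : j < ts.length) :
    (mirrorList ts)[ts.length - 1 - j]'(by rw [length_mirrorList]; omega) = mirror ts[j] := by
  simp only [mirrorList_eq_reverse_map, List.getElem_reverse, List.getElem_map, List.length_map,
    show ts.length - 1 - (ts.length - 1 - j) = j by omega]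

mutual
theorem length_heightsAux : ∀ (t : PTree) (d : ℕ), (heightsAux t d).length = size t
  | node ts, d => by
      rw [heightsAux, List.length_cons, length_heightsListAux ts, size_node]
      omega
theorem length_heightsListAux : ∀ (ts : List PTree) (d : ℕ),
    (heightsListAux ts d).length = sizeList ts
  | [], _ => rfl
  | t :: ts, d => by
      rw [heightsListAux, List.length_append, length_heightsAux t, length_heightsListAux ts,
        sizeList]
end

mutual
theorem heightsAux_eq_map_add : ∀ (t : PTree) (d : ℕ),
    heightsAux t d = (heightsAux t 0).map (d + ·)
  | node ts, d => by
      rw [heightsAux, heightsAux, heightsListAux_eq_map_add ts (d + 1),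
        heightsListAux_eq_map_add ts 1]
      simp [Function.comp_def, Nat.add_assoc]
theorem heightsListAux_eq_map_add : ∀ (ts : List PTree) (d : ℕ),
    heightsListAux ts d = (heightsListAux ts 0).map (d + ·)
  | [], _ => rfl
  | t :: ts, d => by
      rw [heightsListAux, heightsListAux, heightsAux_eq_map_add t d,
        heightsListAux_eq_map_add ts d, List.map_append]
end

theorem getD_heightsListAux (ts : List PTree) (d j k' : ℕ) (hj : j < ts.length)
    (hk' : k' < size ts[j]) :
    (heightsListAux ts d).getD (sizeList (ts.take j) + k') 0 = d + H ts[j] k' := by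
  induction ts generalizing j with
  | nil => simp at hj
  | cons t ts ih =>
      cases j with
      | zero =>
          simp only [List.getElem_cons_zero] at hk' ⊢
          have hlt : k' < (heightsAux t 0).length := by rwa [length_heightsAux]
          rw [heightsListAux, List.take_zero, sizeList, Nat.zero_add,
            List.getD_append _ _ _ _ (by rwa [length_heightsAux]), heightsAux_eq_map_add t d,
            List.getD_eq_getElem _ _ (by simpa using hlt), List.getElem_map, H,
            List.getD_eq_getElem _ _ hlt]
      | succ j =>
          simp only [List.getElem_cons_succ] at hk' ⊢
          rw [heightsListAux, List.take_succ_cons, sizeList, Nat.add_assoc,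
            List.getD_append_right _ _ _ _ (by rw [length_heightsAux]; omega),
            length_heightsAux, Nat.add_sub_cancel_left]
          exact ih j (by simpa using hj) hk'

theorem H_zero (t : PTree) : H t 0 = 0 := by
  obtain ⟨ts⟩ := t
  rfl

theorem H_node (ts : List PTree) (j k' : ℕ) (hj : j < ts.length) (hk' : k' < size ts[j]) :
    H (node ts) (sizeList (ts.take j) + k' + 1) = H ts[j] k' + 1 := by
  rw [H, heightsAux, List.getD_cons_succ, getD_heightsListAux ts 1 j k' hj hk']
  omega

mutual
theorem length_degreesAux : ∀ t : PTree, (degreesAux t).length = size t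
  | node ts => by
      rw [degreesAux, List.length_cons, length_degreesListAux ts, size_node]
      omega
theorem length_degreesListAux : ∀ ts : List PTree, (degreesListAux ts).length = sizeList ts
  | [] => rfl
  | t :: ts => by
      rw [degreesListAux, List.length_append, length_degreesAux t, length_degreesListAux ts,
        sizeList]
end

mutual
theorem sum_degreesAux : ∀ t : PTree,
    ((degreesAux t).map (fun d : ℕ => (d : ℤ) - 1)).sum = -1
  | node ts => by
      rw [degreesAux, List.map_cons, List.sum_cons, sum_degreesListAux ts]
      ring
theorem sum_degreesListAux : ∀ ts : List PTree,
    ((degreesListAux ts).map (fun d : ℕ => (d : ℤ) - 1)).sum = -(ts.length : ℤ)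
  | [] => rfl
  | t :: ts => by
      rw [degreesListAux, List.map_append, List.sum_append, sum_degreesAux t,
        sum_degreesListAux ts, List.length_cons]
      push_cast
      ring
end

-- In `S` itself the degrees are first coerced to `List ℤ` through a monadic `map`.
theorem S_eq_sum_take (T : PTree) (k : ℕ) :
    S T k = (((degreesAux T).take k).map (fun d : ℕ => (d : ℤ) - 1)).sum := by
  rw [S]
  generalize (degreesAux T).take k = l
  induction l with
  | nil => rfl
  | cons a l ih => simpa using ih

theorem sum_take_degreesListAux (ts : List PTree) (j k' : ℕ) (hj : j < ts.length)
    (hk' : k' < size ts[j]) :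
    (((degreesListAux ts).take (sizeList (ts.take j) + k')).map
        (fun d : ℕ => (d : ℤ) - 1)).sum = S ts[j] k' - j := by
  induction ts generalizing j with
  | nil => simp at hj
  | cons t ts ih =>
      cases j with
      | zero =>
          simp only [List.getElem_cons_zero] at hk' ⊢
          rw [degreesListAux, List.take_zero, sizeList, Nat.zero_add, List.take_append,
            Nat.sub_eq_zero_of_le (by rw [length_degreesAux]; omega), List.take_zero,
            List.append_nil, S_eq_sum_take, Nat.cast_zero, sub_zero]
      | succ j =>
          simp only [List.getElem_cons_succ] at hk' ⊢
          rw [degreesListAux, List.take_succ_cons, sizeList, Nat.add_assoc,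
            List.take_append, length_degreesAux,
            List.take_of_length_le (by rw [length_degreesAux]; omega),
            Nat.add_sub_cancel_left, List.map_append, List.sum_append,
            sum_degreesAux t, ih j (by simpa using hj) hk']
          push_cast
          ring

theorem S_zero (t : PTree) : S t 0 = 0 := by
  simp [S]

theorem S_node (ts : List PTree) (j k' : ℕ) (hj : j < ts.length) (hk' : k' < size ts[j]) :
    S (node ts) (sizeList (ts.take j) + k' + 1) = S ts[j] k' + (ts.length - 1 - j) := by
  rw [S_eq_sum_take (node ts), degreesAux, List.take_succ_cons, List.map_cons, List.sum_cons,
    sum_take_degreesListAux ts j k' hj hk']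
  ring

mutual
theorem verticesAux_eq_map_append : ∀ (t : PTree) (p : List ℕ),
    verticesAux t p = (verticesAux t []).map (p ++ ·)
  | node ts, p => by
      rw [verticesAux, verticesAux, verticesListAux_eq_map_append ts p,
        verticesListAux_eq_map_append ts []]
      simp
theorem verticesListAux_eq_map_append : ∀ (ts : List PTree) (p : List ℕ) (i : ℕ),
    verticesListAux ts p i = (verticesListAux ts [] i).map (p ++ ·)
  | [], _, _ => rfl
  | t :: ts, p, i => by
      rw [verticesListAux, verticesListAux, verticesAux_eq_map_append t (p ++ [i]),
        verticesAux_eq_map_append t ([] ++ [i]), verticesListAux_eq_map_append ts p (i + 1),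
        verticesListAux_eq_map_append ts [] (i + 1)]
      simp
end

theorem verticesAux_singleton (t : PTree) (i : ℕ) :
    verticesAux t [i] = (vertices t).map (i :: ·) := by
  rw [verticesAux_eq_map_append t [i], vertices]
  simp

mutual
theorem length_verticesAux : ∀ (t : PTree) (p : List ℕ), (verticesAux t p).length = size t
  | node ts, p => by
      rw [verticesAux, List.length_cons, length_verticesListAux ts, size_node]
      omega
theorem length_verticesListAux : ∀ (ts : List PTree) (p : List ℕ) (i : ℕ),
    (verticesListAux ts p i).length = sizeList ts
  | [], _, _ => rfl
  | t :: ts, p, i => by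
      rw [verticesListAux, List.length_append, length_verticesAux t, length_verticesListAux ts,
        sizeList]
end

theorem length_vertices (t : PTree) : (vertices t).length = size t :=
  length_verticesAux t []

theorem vertices_node (ts : List PTree) :
    vertices (node ts) = [] :: verticesListAux ts [] 0 := rfl

theorem nonRootVertices_node (ts : List PTree) :
    nonRootVertices (node ts) = verticesListAux ts [] 0 := rfl

theorem vertices_eq_cons (t : PTree) : vertices t = [] :: nonRootVertices t := by
  obtain ⟨ts⟩ := t
  rfl

theorem length_nonRootVertices (t : PTree) : (nonRootVertices t).length = size t - 1 := by
  have h := length_vertices t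
  rw [vertices_eq_cons, List.length_cons] at h
  omega

theorem getD_verticesListAux (ts : List PTree) (i j k' : ℕ) (hj : j < ts.length)
    (hk' : k' < size ts[j]) :
    (verticesListAux ts [] i).getD (sizeList (ts.take j) + k') [] =
      (i + j) :: (vertices ts[j]).getD k' [] := by
  induction ts generalizing i j with
  | nil => simp at hj
  | cons t ts ih =>
      cases j with
      | zero =>
          simp only [List.getElem_cons_zero] at hk' ⊢
          have hlt : k' < (vertices t).length := by rwa [length_vertices]
          rw [verticesListAux, List.take_zero, sizeList, Nat.zero_add,
            List.getD_append _ _ _ _ (by rwa [length_verticesAux]), List.nil_append,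
            verticesAux_singleton, List.getD_eq_getElem _ _ (by simpa using hlt),
            List.getElem_map, List.getD_eq_getElem _ _ hlt, Nat.add_zero]
      | succ j =>
          simp only [List.getElem_cons_succ] at hk' ⊢
          rw [verticesListAux, List.take_succ_cons, sizeList, Nat.add_assoc,
            List.getD_append_right _ _ _ _ (by rw [length_verticesAux]; omega),
            length_verticesAux, Nat.add_sub_cancel_left, ih (i + 1) j (by simpa using hj) hk',
            Nat.add_assoc, Nat.add_comm 1 j]

theorem getD_vertices_node (ts : List PTree) (j k' : ℕ) (hj : j < ts.length)
    (hk' : k' < size ts[j]) :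
    (vertices (node ts)).getD (sizeList (ts.take j) + k' + 1) [] =
      j :: (vertices ts[j]).getD k' [] := by
  rw [vertices_node, List.getD_cons_succ, getD_verticesListAux ts 0 j k' hj hk', Nat.zero_add]

theorem mem_verticesListAux {w : List ℕ} : ∀ {ts : List PTree} {i : ℕ},
    w ∈ verticesListAux ts [] i ↔
      ∃ j, ∃ hj : j < ts.length, ∃ p ∈ vertices ts[j], w = (i + j) :: p
  | [], i => by simp [verticesListAux]
  | t :: ts, i => by
      rw [verticesListAux, List.mem_append, List.nil_append, verticesAux_singleton,
        List.mem_map, mem_verticesListAux]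
      constructor
      · rintro (⟨p, hp, rfl⟩ | ⟨j, hj, p, hp, rfl⟩)
        · exact ⟨0, by simp, p, hp, rfl⟩
        · exact ⟨j + 1, by simpa using hj, p, hp, by rw [Nat.add_right_comm, Nat.add_assoc]⟩
      · rintro ⟨_ | j, hj, p, hp, rfl⟩
        · exact Or.inl ⟨p, hp, rfl⟩
        · exact Or.inr ⟨j, by simpa using hj, p, hp, by rw [Nat.add_right_comm, Nat.add_assoc]⟩

theorem cons_mem_vertices_node {ts : List PTree} {j : ℕ} {p : List ℕ} :
    j :: p ∈ vertices (node ts) ↔ ∃ hj : j < ts.length, p ∈ vertices ts[j] := by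
  simp [vertices_node, mem_verticesListAux]

theorem ne_nil_of_mem_nonRootVertices {t : PTree} {w : List ℕ} (hw : w ∈ nonRootVertices t) :
    w ≠ [] := by
  obtain ⟨ts⟩ := t
  obtain ⟨j, -, p, -, rfl⟩ := mem_verticesListAux.mp hw
  exact List.cons_ne_nil _ _

theorem getD_vertices_ne_nil (t : PTree) {k : ℕ} (hk : 0 < k) (hkt : k < size t) :
    (vertices t).getD k [] ≠ [] := by
  obtain ⟨k, rfl⟩ := Nat.exists_eq_add_of_lt hk
  have hlt : k < (nonRootVertices t).length := by rw [length_nonRootVertices]; omega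
  rw [vertices_eq_cons, Nat.zero_add, List.getD_cons_succ, List.getD_eq_getElem _ _ hlt]
  exact ne_nil_of_mem_nonRootVertices (List.getElem_mem hlt)

theorem mirrorPath_nil (t : PTree) : mirrorPath t [] = [] := by
  obtain ⟨ts⟩ := t
  rfl

theorem mirrorPath_cons (ts : List PTree) (j : ℕ) (p : List ℕ) (hj : j < ts.length) :
    mirrorPath (node ts) (j :: p) = (ts.length - 1 - j) :: mirrorPath ts[j] p := by
  rw [mirrorPath, List.getElem?_eq_getElem hj]

theorem mirrorPath_eq_nil_iff (t : PTree) (v : List ℕ) : mirrorPath t v = [] ↔ v = [] := by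
  obtain ⟨ts⟩ := t
  cases v <;> simp [mirrorPath]

theorem mirrorPath_mem : ∀ (t : PTree) {v : List ℕ}, v ∈ vertices t →
    mirrorPath t v ∈ vertices (mirror t)
  | t, [], _ => by rw [mirrorPath_nil, vertices_eq_cons]; exact List.mem_cons_self
  | node ts, j :: p, hv => by
      obtain ⟨hj, hp⟩ := cons_mem_vertices_node.mp hv
      have := sizeList_take_add_size_le ts j hj
      rw [mirrorPath_cons ts j p hj, mirror, cons_mem_vertices_node]
      exact ⟨by rw [length_mirrorList]; omega, by
        rw [getElem_mirrorList ts j hj]; exact mirrorPath_mem ts[j] hp⟩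
termination_by t => size t
decreasing_by rw [size_node]; omega

theorem mirroredEnum_mirror (t : PTree) (k : ℕ) :
    mirroredEnum (mirror t) k = mirrorPath t ((vertices t).getD k []) := by
  rw [mirroredEnum, mirror_mirror]

theorem idxOf_map_of_injective {α β : Type*} [BEq α] [LawfulBEq α] [BEq β] [LawfulBEq β]
    {f : α → β} (hf : Function.Injective f) (l : List α) (a : α) :
    (l.map f).idxOf (f a) = l.idxOf a := by
  induction l with
  | nil => rfl
  | cons b l ih =>
      rw [List.map_cons, List.idxOf_cons, List.idxOf_cons, ih]
      congr 1
      simp [hf.eq_iff]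

theorem idxOf_verticesListAux (ts : List PTree) (i j : ℕ) (hj : j < ts.length) {w : List ℕ}
    (hw : w ∈ vertices ts[j]) :
    (verticesListAux ts [] i).idxOf ((i + j) :: w) =
      sizeList (ts.take j) + (vertices ts[j]).idxOf w := by
  induction ts generalizing i j with
  | nil => simp at hj
  | cons t ts ih =>
      rw [verticesListAux, List.nil_append, verticesAux_singleton]
      cases j with
      | zero =>
          simp only [List.getElem_cons_zero] at hw ⊢
          rw [Nat.add_zero, List.idxOf_append_of_mem (List.mem_map_of_mem hw),
            idxOf_map_of_injective List.cons_injective, List.take_zero, sizeList, Nat.zero_add]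
      | succ j =>
          simp only [List.getElem_cons_succ] at hw ⊢
          have hnot : (i + (j + 1)) :: w ∉ (vertices t).map (i :: ·) := by simp
          rw [List.idxOf_append_of_notMem hnot, List.length_map, length_vertices,
            List.take_succ_cons, sizeList, show i + (j + 1) = i + 1 + j by omega,
            ih (i + 1) j (by simpa using hj) hw, Nat.add_assoc]

theorem idxOf_nonRootVertices_node (ts : List PTree) (j : ℕ) (hj : j < ts.length)
    {w : List ℕ} (hw : w ∈ vertices ts[j]) :
    (nonRootVertices (node ts)).idxOf (j :: w) =
      sizeList (ts.take j) + (vertices ts[j]).idxOf w := by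
  rw [nonRootVertices_node]
  simpa using idxOf_verticesListAux ts 0 j hj hw

theorem internalVertices_node_pair (A B : PTree) :
    internalVertices (node [A, B]) =
      [] :: ((internalVertices A).map (0 :: ·) ++ (internalVertices B).map (1 :: ·)) := by
  have hroot : isInternal (node [A, B]) [] = true := rfl
  rw [internalVertices, vertices_node, verticesListAux, verticesListAux, verticesListAux,
    List.append_nil, List.filter_cons, hroot, if_pos rfl]
  simp only [List.nil_append, List.filter_append]
  rw [verticesAux_singleton A 0, verticesAux_singleton B 1, List.filter_map, List.filter_map]
  rfl

def rotHeights (t : PTree) : List ℕ := (internalVertices (rot t)).map List.length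

theorem rotHeights_cons (t : PTree) (ts : List PTree) :
    rotHeights (node (t :: ts)) =
      (0 :: (rotHeights t).map (· + 1)) ++ (rotHeights (node ts)).map (· + 1) := by
  rw [rotHeights, rot, internalVertices_node_pair]
  simp [rotHeights, Function.comp_def]

theorem length_rotHeights : ∀ t : PTree, (rotHeights t).length = size t - 1
  | node [] => by rw [rotHeights, rot]; rfl
  | node (t :: ts) => by
      have ht := length_rotHeights t
      have hts := length_rotHeights (node ts)
      have := size_pos t
      rw [rotHeights_cons, List.length_append, List.length_cons, List.length_map,
        List.length_map, ht, hts, size_node, size_node, sizeList]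
      omega
termination_by t => size t
decreasing_by
  all_goals
    have := size_pos t
    have := size_pos (node ts)
    simp only [size_node, sizeList] at *
    omega

theorem getD_rotHeights_node (ts : List PTree) (j q : ℕ) (hj : j < ts.length)
    (hq : q < size ts[j]) :
    (rotHeights (node ts)).getD (sizeList (ts.take j) + q) 0 =
      j + (0 :: (rotHeights ts[j]).map (· + 1)).getD q 0 := by
  induction ts generalizing j with
  | nil => simp at hj
  | cons t ts ih =>
      have hlen : (0 :: (rotHeights t).map (· + 1)).length = size t := by
        have := size_pos t
        rw [List.length_cons, List.length_map, length_rotHeights]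
        omega
      rw [rotHeights_cons]
      cases j with
      | zero =>
          simp only [List.getElem_cons_zero] at hq ⊢
          rw [List.take_zero, sizeList, Nat.zero_add, Nat.zero_add,
            List.getD_append _ _ _ _ (by omega)]
      | succ j =>
          simp only [List.getElem_cons_succ] at hq ⊢
          have hj' : j < ts.length := by simpa using hj
          have hlt : sizeList (ts.take j) + q < (rotHeights (node ts)).length := by
            have := sizeList_take_add_size_le ts j hj'
            rw [length_rotHeights, size_node]
            omega
          rw [List.take_succ_cons, sizeList, Nat.add_assoc,
            List.getD_append_right _ _ _ _ (by omega), hlen, Nat.add_sub_cancel_left,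
            List.getD_eq_getElem _ _ (by simpa using hlt), List.getElem_map,
            ← List.getD_eq_getElem _ 0 hlt, ih j hj' hq]
          omega

theorem length_iota (T : PTree) (u : List ℕ) :
    (iota T u).length = (rotHeights T).getD ((nonRootVertices T).idxOf u) 0 := by
  rw [iota, rotHeights, ← List.getD_map _ [] List.length]
  rfl

/-- The root of `ts[j]` becomes the `j`-th vertex of the right spine of `rot (node ts)`, and
`rot ts[j]` hangs as its left subtree. -/
theorem length_iota_cons (ts : List PTree) (j : ℕ) (hj : j < ts.length) {w : List ℕ}
    (hw : w ∈ vertices ts[j]) :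
    (iota (node ts) (j :: w)).length = j + if w = [] then 0 else (iota ts[j] w).length + 1 := by
  have hidx := List.idxOf_lt_length_of_mem hw
  rw [length_vertices] at hidx
  rw [length_iota, idxOf_nonRootVertices_node ts j hj hw, getD_rotHeights_node ts j _ hj hidx]
  congr 1
  split_ifs with hnil
  · subst hnil
    rw [vertices_eq_cons, List.idxOf_cons_self]
    rfl
  · rw [vertices_eq_cons] at hw ⊢
    have hw' : w ∈ nonRootVertices ts[j] := (List.mem_cons.mp hw).resolve_left hnil
    have hlt := List.idxOf_lt_length_of_mem hw'
    rw [length_nonRootVertices, ← length_rotHeights] at hlt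
    rw [List.idxOf_cons_ne _ (Ne.symm hnil), List.getD_cons_succ,
      List.getD_eq_getElem _ _ (by simpa using hlt), List.getElem_map,
      ← List.getD_eq_getElem _ 0 hlt, length_iota]

theorem length_iota_mirror_mirroredEnum : ∀ (M : PTree) (k : ℕ), 1 ≤ k → k < size M →
    ((iota (mirror M) (mirroredEnum (mirror M) k)).length : ℤ) = H M k + S M k - 1
  | node ts, k, hk1, hk2 => by
      obtain ⟨j, hj, k', hk', hk⟩ :=
        exists_eq_sizeList_take_add ts (k - 1) (by rw [size_node] at hk2; omega)
      obtain rfl : k = sizeList (ts.take j) + k' + 1 := by omega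
      have hv : (vertices ts[j]).getD k' [] ∈ vertices ts[j] := by
        rw [List.getD_eq_getElem _ _ (by rwa [length_vertices])]
        exact List.getElem_mem _
      have hw := mirrorPath_mem ts[j] hv
      rw [← getElem_mirrorList ts j hj] at hw
      rw [mirroredEnum_mirror, getD_vertices_node ts j k' hj hk', mirrorPath_cons ts j _ hj,
        mirror, length_iota_cons _ _ _ hw, getElem_mirrorList ts j hj, H_node ts j k' hj hk',
        S_node ts j k' hj hk']
      simp only [mirrorPath_eq_nil_iff]
      rcases Nat.eq_zero_or_pos k' with rfl | hk'pos
      · rw [vertices_eq_cons, List.getD_cons_zero, if_pos rfl, H_zero, S_zero]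
        push_cast
        omega
      · have ih := length_iota_mirror_mirroredEnum ts[j] k' hk'pos hk'
        rw [mirroredEnum_mirror] at ih
        rw [if_neg (getD_vertices_ne_nil ts[j] hk'pos hk')]
        push_cast
        omega
termination_by M => size M
decreasing_by
  have := sizeList_take_add_size_le ts j hj
  rw [size_node]
  omega

end PTree

theorem stmt12 (T : PTree) (hT : 2 ≤ size T) (k : ℕ) (hk1 : 1 ≤ k)
    (hk2 : k ≤ size T - 1) :
    ((iota T (mirroredEnum T k)).length : ℤ) =
      (H (mirror T) k : ℤ) + S (mirror T) k - 1 := by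
  have h := length_iota_mirror_mirroredEnum (mirror T) k hk1 (by rw [size_mirror]; omega)
  rwa [mirror_mirror] at h
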